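/- arXiv:1612.05941 — 2 statements merged into one kernel-verified Lean document; each statement's English description precedes it below -/
import Mathlib

section
/- The Continuum Hypothesis (the cardinality of the continuum equals ℵ₁) holds if and only if there exists a function F : ℕ → (ℕ → ℕ) → (ℕ → ℕ) such that for all functions f, g : ℕ → ℕ there exists a natural number n with F n f = g or F n g = f. -/
/-!
If `#α ≤ ℵ₁`, a well-order of `α` of type `ord #α` has countable initial segments, and `F n f`
can enumerate the elements below `f`; of two elements one is below the other. Conversely, if
`ℵ₁ < #α`, pick `S` of size `ℵ₁`: the values `F n x` for `x ∈ S` form a set of size `ℵ₁` that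
misses some `g`, so every `x ∈ S` is some `F n g`, making `S` countable.
-/

open Cardinal Set

universe u

section
variable {α : Type u}

theorem exists_enum_of_countable_Iic [LinearOrder α] (h : ∀ a : α, (Iic a).Countable) :
    ∃ F : ℕ → α → α, ∀ f g, ∃ n, F n f = g ∨ F n g = f := by
  choose G hG using fun a => (h a).exists_eq_range nonempty_Iic
  refine ⟨fun n f => G f n, fun f g => ?_⟩
  rcases le_total g f with hgf | hfg
  · obtain ⟨n, hn⟩ : g ∈ range (G f) := hG f ▸ hgf
    exact ⟨n, .inl hn⟩
  · obtain ⟨n, hn⟩ : f ∈ range (G g) := hG g ▸ hfg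
    exact ⟨n, .inr hn⟩

theorem exists_linearOrder_countable_Iic (h : #α ≤ ℵ₁) :
    ∃ _ : LinearOrder α, ∀ a : α, (Iic a).Countable := by
  obtain ⟨_, _, hα⟩ := exists_ord_eq_type_lt α
  refine ⟨inferInstance, fun a => ?_⟩
  have hIio : (Iio a).Countable :=
    le_aleph0_iff_set_countable.1 (lt_aleph_one_iff.1 ((mk_Iio_lt a hα).trans_le h))
  simpa only [Iio_insert] using hIio.insert a

theorem mk_le_aleph_one_of_enum {F : ℕ → α → α} (hF : ∀ f g, ∃ n, F n f = g ∨ F n g = f) :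
    #α ≤ ℵ₁ := by
  by_contra! hlt
  obtain ⟨S, hS⟩ := le_mk_iff_exists_set.1 hlt.le
  set U := ⋃ x ∈ S, range (F · x)
  have hU : #U < #α := calc
    #U ≤ #S * ⨆ x : S, #(range (F · x.1)) := mk_biUnion_le _ S
    _ ≤ ℵ₁ * ℵ₀ := by
      rw [hS]
      exact mul_le_mul_right (ciSup_le' fun x => le_aleph0_iff_set_countable.2 (countable_range _)) _
    _ = ℵ₁ := aleph_mul_aleph0 1
    _ < #α := hlt
  obtain ⟨g, hg⟩ := (ne_univ_iff_exists_notMem U).1 fun hUniv => hU.ne (by rw [hUniv, mk_univ])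
  have hSg : S ⊆ range (F · g) := fun x hx => by
    obtain ⟨n, hn | hn⟩ := hF x g
    · exact absurd (mem_biUnion hx (mem_range.2 ⟨n, hn⟩)) hg
    · exact ⟨n, hn⟩
  have hS_countable := le_aleph0_iff_set_countable.2 ((countable_range _).mono hSg)
  exact aleph0_lt_aleph_one.not_ge (hS ▸ hS_countable)

theorem mk_le_aleph_one_iff_exists_enum :
    #α ≤ ℵ₁ ↔ ∃ F : ℕ → α → α, ∀ f g, ∃ n, F n f = g ∨ F n g = f := by
  refine ⟨fun h => ?_, fun ⟨F, hF⟩ => mk_le_aleph_one_of_enum hF⟩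
  obtain ⟨_, hIic⟩ := exists_linearOrder_countable_Iic h
  exact exists_enum_of_countable_Iic hIic

end

theorem continuum_eq_aleph_one_iff_mk_nat_nat_le : continuum.{u} = ℵ₁ ↔ #(ℕ → ℕ) ≤ ℵ₁ := by
  rw [le_antisymm_iff, and_iff_left aleph_one_le_continuum, ← lift_le.{u} (a := #(ℕ → ℕ))]
  simp

theorem stmt_0 :
    Cardinal.continuum = Cardinal.aleph 1 ↔
      ∃ F : ℕ → (ℕ → ℕ) → (ℕ → ℕ),
        ∀ f g : ℕ → ℕ, ∃ n : ℕ, F n f = g ∨ F n g = f := by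
  rw [continuum_eq_aleph_one_iff_mk_nat_nat_le, mk_le_aleph_one_iff_exists_enum]
end

section
/- Let f : ℝ → ℝ be continuous with f 0 < 0 and f 1 > 0. Then there exist sequences a, b : ℕ → ℝ such that for every n ≥ 1: 0 ≤ a n, a n < b n, b n ≤ 1, for every real x with a n < x < b n one has |f x| < 1/n, and for all indices j, k with 1 ≤ j < k one has a j < a k and b k < b j (the open intervals are strictly nested). -/
/-!
By the intermediate value theorem `f` has a zero `c ∈ (0, 1)`. The intervals are
`(c - d n, c + d n)`, where `d` is strictly decreasing, positive, and at each `n` below both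
the distance from `c` to `{0, 1}` and a continuity radius of `f` at `c` for `ε = 1 / (n + 1)`.
-/

open Set

lemma exists_strictAnti_pos_le {α : Type*} [Field α] [LinearOrder α] [IsStrictOrderedRing α]
    (r : ℕ → α) (hr : ∀ n, 0 < r n) :
    ∃ d : ℕ → α, StrictAnti d ∧ (∀ n, 0 < d n) ∧ ∀ n, d n ≤ r n := by
  let d : ℕ → α := fun n => Nat.rec (r 0) (fun n dn => min dn (r (n + 1)) / 2) n
  have d_succ : ∀ n, d (n + 1) = min (d n) (r (n + 1)) / 2 := fun _ => rfl
  have d_pos : ∀ n, 0 < d n := by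
    intro n
    induction n with
    | zero => exact hr 0
    | succ n ih => rw [d_succ]; exact half_pos (lt_min ih (hr (n + 1)))
  refine ⟨d, strictAnti_nat_of_succ_lt fun n => ?_, d_pos, fun n => ?_⟩
  · rw [d_succ]
    linarith [min_le_left (d n) (r (n + 1)), lt_min (d_pos n) (hr (n + 1))]
  · cases n with
    | zero => exact le_rfl
    | succ n =>
      rw [d_succ]
      linarith [min_le_right (d n) (r (n + 1)), lt_min (d_pos n) (hr (n + 1))]

lemma exists_abs_lt_of_continuousAt_of_eq_zero {f : ℝ → ℝ} {c : ℝ} (hf : ContinuousAt f c)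
    (hfc : f c = 0) {ε : ℝ} (hε : 0 < ε) : ∃ δ > 0, ∀ x, |x - c| < δ → |f x| < ε := by
  obtain ⟨δ, hδ, hδf⟩ := Metric.continuousAt_iff.mp hf ε hε
  refine ⟨δ, hδ, fun x hx => ?_⟩
  simpa [Real.dist_eq, hfc] using hδf (x := x) (by rwa [Real.dist_eq])

theorem stmt_2 (f : ℝ → ℝ) (hf : Continuous f) (h0 : f 0 < 0) (h1 : f 1 > 0) :
    ∃ a b : ℕ → ℝ,
      (∀ n : ℕ, 1 ≤ n →
        0 ≤ a n ∧ a n < b n ∧ b n ≤ 1 ∧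
        (∀ x : ℝ, a n < x → x < b n → |f x| < 1 / n)) ∧
      (∀ j k : ℕ, 1 ≤ j → j < k → a j < a k ∧ b k < b j) := by
  obtain ⟨c, ⟨hc0, hc1⟩, hfc⟩ : ∃ c ∈ Ioo (0 : ℝ) 1, f c = 0 :=
    intermediate_value_Ioo zero_le_one hf.continuousOn ⟨h0, h1⟩
  choose δ hδ_pos hδ using fun n : ℕ =>
    exists_abs_lt_of_continuousAt_of_eq_zero hf.continuousAt hfc (Nat.one_div_pos_of_nat (n := n))
  obtain ⟨d, hd_anti, hd_pos, hd_le⟩ :=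
    exists_strictAnti_pos_le (fun n => min (δ n) (min c (1 - c)))
      fun n => lt_min (hδ_pos n) (lt_min hc0 (by linarith))
  have hd_δ n : d n ≤ δ n := (hd_le n).trans (min_le_left _ _)
  have hd_c n : d n ≤ c := (hd_le n).trans ((min_le_right _ _).trans (min_le_left _ _))
  have hd_1c n : d n ≤ 1 - c := (hd_le n).trans ((min_le_right _ _).trans (min_le_right _ _))
  refine ⟨fun n => c - d n, fun n => c + d n, fun n hn => ⟨?_, ?_, ?_, fun x hx₁ hx₂ => ?_⟩,
    fun j k _ hjk => ⟨?_, ?_⟩⟩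
  · linarith [hd_c n]
  · linarith [hd_pos n]
  · linarith [hd_1c n]
  · have hx : |x - c| < δ n := abs_sub_lt_iff.mpr ⟨by linarith [hd_δ n], by linarith [hd_δ n]⟩
    calc |f x| < 1 / ((n : ℝ) + 1) := hδ n x hx
      _ ≤ 1 / n := one_div_le_one_div_of_le (by exact_mod_cast hn) (by linarith)
  · linarith [hd_anti hjk]
  · linarith [hd_anti hjk]
end
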